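/- Let 1 ≤ r ≤ n and let P = (V⁽¹⁾,…,V⁽ᴺ⁾) and P' = (V'⁽¹⁾,…,V'⁽ᴺ⁾) be proper datasets of N votes with the same sufficient statistic, and suppose V⁽ⁱ⁾ ≠ V'⁽ⁱ'⁾ for some indices i, i'. Then there exists a sequence P = D₀, D₁, …, D_m with m ≤ 3 such that: each D_t is a proper or improper dataset of N votes with the same sufficient statistic as P; each D_{t+1} is obtained from D_t by a swap operation among two votes; the i-th vote of D_m is a proper vote whose number of concurrences with V'⁽ⁱ'⁾ is strictly greater than the number of concurrences of V⁽ⁱ⁾ with V'⁽ⁱ'⁾; if D_m is an improper dataset, then its improper vote together with its i-th vote forms a resolvable pair; and whenever D_t and D_{t+1} are both improper datasets, there exists a resolvable pair occupying the same pair of indices in both D_t and D_{t+1}, at least one of whose indices belongs to the two votes replaced in the swap from D_t to D_{t+1}. -/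

import Mathlib

/-- A proper vote: an `r × n` integer matrix with all entries in `{0,1}`, every row sum
equal to `1`, and every column sum equal to `0` or `1`. -/
def IsProperVote (r n : ℕ) (V : Matrix (Fin r) (Fin n) ℤ) : Prop :=
  (∀ j k, V j k = 0 ∨ V j k = 1) ∧
  (∀ j, ∑ k, V j k = 1) ∧
  (∀ k, ∑ j, V j k = 0 ∨ ∑ j, V j k = 1)

/-- An improper vote: an `r × n` integer matrix with every row sum equal to `1`, every
column sum equal to `0` or `1`, exactly one entry equal to `-1`, and all other entries
in `{0,1}`. -/
def IsImproperVote (r n : ℕ) (V : Matrix (Fin r) (Fin n) ℤ) : Prop :=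
  (∀ j, ∑ k, V j k = 1) ∧
  (∀ k, ∑ j, V j k = 0 ∨ ∑ j, V j k = 1) ∧
  (∃ j' k', V j' k' = -1 ∧ ∀ j k, (j, k) ≠ (j', k') → V j k = 0 ∨ V j k = 1)

/-- A proper dataset: a finite sequence of proper votes. -/
def IsProperDataset (r n N : ℕ) (D : Fin N → Matrix (Fin r) (Fin n) ℤ) : Prop :=
  ∀ i, IsProperVote r n (D i)

/-- An improper dataset: exactly one member is an improper vote, all other members are
proper votes, and the entrywise sum of all members is nonnegative. -/
def IsImproperDataset (r n N : ℕ) (D : Fin N → Matrix (Fin r) (Fin n) ℤ) : Prop :=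
  (∃ i₀, IsImproperVote r n (D i₀) ∧ ∀ i, i ≠ i₀ → IsProperVote r n (D i)) ∧
  ∀ j k, 0 ≤ ∑ i, D i j k

/-- A resolvable pair in a dataset `D`: indices `iim ≠ ipr` such that `D iim` is an
improper vote, `D ipr` is a proper vote, and the `-1` entry of `D iim` is at a cell
where `D ipr` has entry `1`. -/
def IsResolvablePair (r n N : ℕ) (D : Fin N → Matrix (Fin r) (Fin n) ℤ)
    (iim ipr : Fin N) : Prop :=
  iim ≠ ipr ∧ IsImproperVote r n (D iim) ∧ IsProperVote r n (D ipr) ∧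
  ∃ j k, D iim j k = -1 ∧ D ipr j k = 1

open Classical in
/-- Number of concurrences of two (proper) votes: the number of positions `j` at which
the two votes have identical rows (i.e. rank the same candidate in position `j`). -/
noncomputable def concurrences (r n : ℕ) (V V' : Matrix (Fin r) (Fin n) ℤ) : ℕ :=
  (Finset.univ.filter fun j : Fin r => ∀ k, V j k = V' j k).card

/-!
Write the votes as injections: `σ` for `P i` and `τ` for `P' i'`, and pick a row `j` with
`σ j ≠ τ j`. Equal sufficient statistics give a vote `l` with `τ j` in row `j`. If `τ j` already
occurs in `σ`, at row `j₂`, exchanging the values of `σ` at `j` and `j₂` gains a concurrence and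
vote `l` absorbs the difference: it stays proper, or becomes an improper vote whose `-1` sits on
the new `1` of vote `i`. If this happens for no disagreement row `j`, then `τ j ∉ range σ` and
`σ j ∉ range τ`, and redirecting row `j` of `σ` to `τ j` gains a concurrence; this is a single swap
with any vote that contains `τ j` but not `σ j`. If there is none, counting column `σ j` gives a
vote `q` avoiding both values, and a first swap between `l` and `q` along the alternating path
starting at column `σ j` frees `l` of `σ j`, reducing to that case.
-/

namespace VoteSwap

open Finset Function Set

variable {r n N : ℕ}

lemma injective_update_of_notMem_range {α β : Type*} [DecidableEq α] {f : α → β}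
    (hf : Injective f) (a : α) {b : β} (hb : b ∉ range f) : Injective (update f a b) := by
  intro x y hxy
  by_cases hx : x = a <;> by_cases hy : y = a
  · rw [hx, hy]
  · subst hx
    rw [update_self, update_of_ne hy] at hxy
    exact absurd ⟨y, hxy.symm⟩ hb
  · subst hy
    rw [update_self, update_of_ne hx] at hxy
    exact absurd ⟨x, hxy⟩ hb
  · rw [update_of_ne hx, update_of_ne hy] at hxy
    exact hf hxy

lemma exists_exchange_notMem_range {α β : Type*} {f g : α → β} (hf : Injective f)
    (hg : Injective g) {c : β} (hc : c ∉ range g) :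
    ∃ f' g' : α → β, Injective f' ∧ Injective g' ∧
      (∀ x, f' x = g x ∧ g' x = f x ∨ f' x = f x ∧ g' x = g x) ∧
      c ∉ range f' ∧ ∀ x, f x ∉ insert c (range g) → f' x = f x := by
  classical
  -- `S` is the alternating path `a, y₁, y₂, …` with `f a = c` and `f yₜ₊₁ = g yₜ`; since
  -- `c ∉ range g` it is closed under both `g⁻¹ ∘ f` and `f⁻¹ ∘ g`, so exchanging its rows
  -- keeps both maps injective.
  set S : Set α := {x | ∃ a, f a = c ∧ Relation.ReflTransGen (fun y z => f z = g y) a x}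
  have hfwd : ∀ x ∈ S, ∀ y, f y = g x → y ∈ S := fun x ⟨a, ha, hax⟩ y hy => ⟨a, ha, hax.tail hy⟩
  have hbwd : ∀ x ∈ S, ∀ y, g y = f x → y ∈ S := by
    rintro x ⟨a, ha, hax⟩ y hy
    cases hax with
    | refl => exact absurd ⟨y, hy.trans ha⟩ hc
    | tail hab hbx => exact hg (hy.trans hbx) ▸ ⟨a, ha, hab⟩
  have hS : ∀ x ∈ S, f x ∈ insert c (range g) := by
    rintro x ⟨a, ha, hax⟩
    cases hax with
    | refl => exact Or.inl ha
    | tail _ hbx => exact Or.inr ⟨_, hbx.symm⟩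
  refine ⟨S.piecewise g f, S.piecewise f g,
    (injective_piecewise_iff _).2
      ⟨hg.injOn, hf.injOn, fun x hx y hy hxy => hy (hfwd x hx y hxy.symm)⟩,
    (injective_piecewise_iff _).2
      ⟨hf.injOn, hg.injOn, fun x hx y hy hxy => hy (hbwd x hx y hxy.symm)⟩,
    fun x => ?_, ?_, fun x hx => piecewise_eq_of_notMem _ _ _ fun hxS => hx (hS x hxS)⟩
  · by_cases hx : x ∈ S <;> simp [hx]
  · rintro ⟨x, hx⟩
    by_cases hxS : x ∈ S
    · exact hc ⟨x, by simpa [hxS] using hx⟩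
    · exact hxS ⟨x, by simpa [hxS] using hx, .refl⟩

def voteMatrix (f : Fin r → Fin n) : Matrix (Fin r) (Fin n) ℤ :=
  Matrix.of fun a k => if f a = k then 1 else 0

@[simp]
lemma voteMatrix_apply (f : Fin r → Fin n) (a : Fin r) (k : Fin n) :
    voteMatrix f a k = if f a = k then 1 else 0 :=
  rfl

lemma voteMatrix_injective : Injective (voteMatrix : (Fin r → Fin n) → _) := by
  intro f g h
  funext a
  simpa [eq_comm] using congrFun (congrFun h a) (f a)

lemma sum_voteMatrix_apply_row (f : Fin r → Fin n) (a : Fin r) : ∑ k, voteMatrix f a k = 1 := by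
  simp

lemma sum_voteMatrix_apply_col {f : Fin r → Fin n} (hf : Injective f) (k : Fin n) :
    ∑ x, voteMatrix f x k = if k ∈ range f then 1 else 0 := by
  split_ifs with hk
  · obtain ⟨a, rfl⟩ := hk
    simp [hf.eq_iff]
  · exact Finset.sum_eq_zero fun x _ => by simpa using fun h => hk ⟨x, h⟩

lemma isProperVote_voteMatrix {f : Fin r → Fin n} (hf : Injective f) :
    IsProperVote r n (voteMatrix f) := by
  refine ⟨fun a k => ?_, sum_voteMatrix_apply_row f, fun k => ?_⟩
  · simp only [voteMatrix_apply]; split_ifs <;> simp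
  · rw [sum_voteMatrix_apply_col hf]; split_ifs <;> simp

lemma exists_voteMatrix_of_isProperVote {V : Matrix (Fin r) (Fin n) ℤ} (hV : IsProperVote r n V) :
    ∃ f, Injective f ∧ V = voteMatrix f := by
  obtain ⟨h01, hrow, hcol⟩ := hV
  have hcard {ι : Type} [Fintype ι] (v : ι → ℤ) (hv : ∀ x, v x = 0 ∨ v x = 1) :
      ∑ x, v x = #{x | v x = 1} := by
    rw [Finset.natCast_card_filter]
    exact sum_congr rfl fun x _ => by rcases hv x with h | h <;> simp [h]
  have hone : ∀ a, ∃ k₀, ∀ k, V a k = 1 ↔ k = k₀ := by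
    intro a
    have h := hrow a
    rw [hcard _ (h01 a)] at h
    obtain ⟨k₀, hk₀⟩ := Finset.card_eq_one.1 (by exact_mod_cast h)
    exact ⟨k₀, fun k => by simpa using Finset.ext_iff.1 hk₀ k⟩
  choose f hf using hone
  refine ⟨f, fun a b hab => ?_, ?_⟩
  · have hle : #{x | V x (f a) = 1} ≤ 1 := by
      have h := hcol (f a)
      rw [hcard _ fun x => h01 x (f a)] at h
      omega
    exact Finset.card_le_one.1 hle a (by simp [hf]) b (by simp [hf, hab])
  · ext a k
    rcases h01 a k with h | h <;> simp [h, ← hf a k, eq_comm]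

lemma concurrences_voteMatrix (f g : Fin r → Fin n) :
    concurrences r n (voteMatrix f) (voteMatrix g) = #{a | f a = g a} := by
  classical
  unfold concurrences
  congr 1
  refine Finset.filter_congr fun a _ => ⟨fun h => ?_, fun h k => by simp [h]⟩
  simpa [eq_comm] using h (f a)

lemma concurrences_voteMatrix_lt {f h τ : Fin r → Fin n} {j : Fin r} (hfj : f j ≠ τ j)
    (hhj : h j = τ j) (hagree : ∀ x, f x = τ x → h x = τ x) :
    concurrences r n (voteMatrix f) (voteMatrix τ) <
      concurrences r n (voteMatrix h) (voteMatrix τ) := by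
  rw [concurrences_voteMatrix, concurrences_voteMatrix]
  refine Finset.card_lt_card (Finset.ssubset_iff_of_subset ?_ |>.2 ⟨j, by simpa, by simpa⟩)
  intro x
  simpa using hagree x

lemma voteMatrix_add_sub_of_exchange {f g f' g' : Fin r → Fin n}
    (hex : ∀ x, f' x = g x ∧ g' x = f x ∨ f' x = f x ∧ g' x = g x) :
    voteMatrix f + voteMatrix g - voteMatrix f' = voteMatrix g' := by
  ext x k
  rcases hex x with ⟨h1, h2⟩ | ⟨h1, h2⟩ <;> simp [h1, h2]

lemma isProperVote_or_resolvable_voteMatrix_add_sub {f g h : Fin r → Fin n} (hf : Injective f)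
    (hg : Injective g) (hh : Injective h) {a : Fin r}
    (hrow : ∀ x ≠ a, h x = f x ∨ h x = g x) (hfga : f a ≠ g a)
    (hha : h a ∈ range f ∪ range g) (hcap : range f ∩ range g ⊆ range h) :
    IsProperVote r n (voteMatrix f + voteMatrix g - voteMatrix h) ∨
      (IsImproperVote r n (voteMatrix f + voteMatrix g - voteMatrix h) ∧
        ∃ b c, (voteMatrix f + voteMatrix g - voteMatrix h) b c = -1 ∧ voteMatrix h b c = 1) := by
  set M := voteMatrix f + voteMatrix g - voteMatrix h
  have hM : ∀ x k, M x k = (if f x = k then 1 else 0) + (if g x = k then 1 else 0)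
      - (if h x = k then 1 else 0) := fun _ _ => rfl
  have hrowsum : ∀ x, ∑ k, M x k = 1 := fun x => by
    simp only [M, Matrix.sub_apply, Matrix.add_apply, sum_sub_distrib, sum_add_distrib,
      sum_voteMatrix_apply_row]
    norm_num
  have hcolsum : ∀ k, ∑ x, M x k = 0 ∨ ∑ x, M x k = 1 := fun k => by
    have hsub : k ∈ range h → k ∈ range f ∪ range g := by
      rintro ⟨x, rfl⟩
      rcases eq_or_ne x a with rfl | hx
      · exact hha
      · rcases hrow x hx with hx | hx <;> simp [hx]
    have hcap := @hcap k
    simp only [M, Matrix.sub_apply, Matrix.add_apply, sum_sub_distrib, sum_add_distrib,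
      sum_voteMatrix_apply_col hf, sum_voteMatrix_apply_col hg, sum_voteMatrix_apply_col hh]
    simp only [Set.mem_union, Set.mem_inter_iff] at hsub hcap
    split_ifs <;> simp_all
  have hentry : ∀ x, (h x = f x ∨ h x = g x) → ∀ k, M x k = 0 ∨ M x k = 1 := by
    rintro x (hx | hx) k <;> rw [hM, hx] <;> split_ifs <;> simp
  by_cases hfa : h a = f a ∨ h a = g a
  · refine Or.inl ⟨fun x => ?_, hrowsum, hcolsum⟩
    rcases eq_or_ne x a with rfl | hx
    exacts [hentry x hfa, hentry x (hrow x hx)]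
  · push Not at hfa
    have hneg : M a (h a) = -1 := by rw [hM]; simp [hfa.1.symm, hfa.2.symm]
    refine Or.inr ⟨⟨hrowsum, hcolsum, a, h a, hneg, fun x k hxk => ?_⟩, a, h a, hneg, by simp⟩
    rcases eq_or_ne x a with rfl | hx
    · have hk : h x ≠ k := fun hk => hxk (by rw [hk])
      rw [hM]
      by_cases h1 : f x = k <;> by_cases h2 : g x = k <;> simp_all
    · exact hentry x (hrow x hx) k

def swapVotes (D : Fin N → Matrix (Fin r) (Fin n) ℤ) (u v : Fin N)
    (V : Matrix (Fin r) (Fin n) ℤ) : Fin N → Matrix (Fin r) (Fin n) ℤ :=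
  update (update D u V) v (D u + D v - V)

section swapVotes

variable {D : Fin N → Matrix (Fin r) (Fin n) ℤ} {u v : Fin N} {V : Matrix (Fin r) (Fin n) ℤ}

lemma swapVotes_apply_left (huv : u ≠ v) : swapVotes D u v V u = V := by
  simp [swapVotes, huv]

lemma swapVotes_apply_right : swapVotes D u v V v = D u + D v - V := by
  simp [swapVotes]

lemma swapVotes_apply_of_ne {x : Fin N} (hxu : x ≠ u) (hxv : x ≠ v) :
    swapVotes D u v V x = D x := by
  simp [swapVotes, hxu, hxv]

lemma swapVotes_add (huv : u ≠ v) :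
    swapVotes D u v V u + swapVotes D u v V v = D u + D v := by
  rw [swapVotes_apply_left huv, swapVotes_apply_right]
  abel

lemma sum_swapVotes (huv : u ≠ v) : ∑ x, swapVotes D u v V x = ∑ x, D x := by
  have hsplit : ∀ F : Fin N → Matrix (Fin r) (Fin n) ℤ,
      ∑ x, F x = F u + F v + ∑ x ∈ (univ.erase u).erase v, F x := fun F => by
    rw [← add_sum_erase _ _ (mem_univ u), ← add_sum_erase _ _ (mem_erase.2 ⟨huv.symm, mem_univ v⟩),
      add_assoc]
  rw [hsplit, hsplit D, swapVotes_add huv]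
  congr 1
  refine sum_congr rfl fun x hx => ?_
  simp only [mem_erase] at hx
  exact swapVotes_apply_of_ne hx.2.1 hx.1

lemma isProperDataset_swapVotes (huv : u ≠ v) (hD : IsProperDataset r n N D)
    (hV : IsProperVote r n V) (hW : IsProperVote r n (D u + D v - V)) :
    IsProperDataset r n N (swapVotes D u v V) := by
  intro x
  rcases eq_or_ne x u with rfl | hxu
  · rwa [swapVotes_apply_left huv]
  rcases eq_or_ne x v with rfl | hxv
  · rwa [swapVotes_apply_right]
  · rw [swapVotes_apply_of_ne hxu hxv]; exact hD x

end swapVotes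

lemma not_isImproperDataset_of_isProperDataset {D : Fin N → Matrix (Fin r) (Fin n) ℤ}
    (hD : IsProperDataset r n N D) : ¬ IsImproperDataset r n N D := by
  rintro ⟨⟨x, ⟨-, -, a, k, hneg, -⟩, -⟩, -⟩
  rcases (hD x).1 a k with h | h <;> omega

lemma sum_apply_nonneg_of_isProperDataset {D : Fin N → Matrix (Fin r) (Fin n) ℤ}
    (hD : IsProperDataset r n N D) (a : Fin r) (k : Fin n) : 0 ≤ (∑ x, D x) a k := by
  rw [Matrix.sum_apply]
  exact sum_nonneg fun x _ => by rcases (hD x).1 a k with h | h <;> simp [h]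

def HasImprovingSwaps (k : ℕ) (P : Fin N → Matrix (Fin r) (Fin n) ℤ) (i : Fin N)
    (T : Matrix (Fin r) (Fin n) ℤ) : Prop :=
  ∃ (m : ℕ) (D : ℕ → Fin N → Matrix (Fin r) (Fin n) ℤ) (R : ℕ → Fin N × Fin N),
    m ≤ k ∧ D 0 = P ∧
    (∀ t ≤ m, (IsProperDataset r n N (D t) ∨ IsImproperDataset r n N (D t)) ∧
      ∑ i₀, D t i₀ = ∑ i₀, P i₀) ∧
    (∀ t < m, (R t).1 ≠ (R t).2 ∧
      (∀ i₀, i₀ ≠ (R t).1 → i₀ ≠ (R t).2 → D (t+1) i₀ = D t i₀) ∧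
      D (t+1) (R t).1 + D (t+1) (R t).2 = D t (R t).1 + D t (R t).2) ∧
    IsProperVote r n (D m i) ∧
    concurrences r n (P i) T < concurrences r n (D m i) T ∧
    (IsImproperDataset r n N (D m) → ∃ iim, IsResolvablePair r n N (D m) iim i) ∧
    (∀ t, t + 1 ≤ m →
      IsImproperDataset r n N (D t) → IsImproperDataset r n N (D (t+1)) →
      ∃ iim ipr, IsResolvablePair r n N (D t) iim ipr ∧
        IsResolvablePair r n N (D (t+1)) iim ipr ∧
        (iim = (R t).1 ∨ iim = (R t).2 ∨ ipr = (R t).1 ∨ ipr = (R t).2))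

section HasImprovingSwaps

variable {P : Fin N → Matrix (Fin r) (Fin n) ℤ} {i : Fin N} {T : Matrix (Fin r) (Fin n) ℤ}

lemma HasImprovingSwaps.mono {k k' : ℕ} (h : HasImprovingSwaps k P i T) (hk : k ≤ k') :
    HasImprovingSwaps k' P i T := by
  obtain ⟨m, D, R, hm, rest⟩ := h
  exact ⟨m, D, R, hm.trans hk, rest⟩

lemma hasImprovingSwaps_one (hP : IsProperDataset r n N P) {l : Fin N} (hil : i ≠ l)
    {V : Matrix (Fin r) (Fin n) ℤ} (hV : IsProperVote r n V)
    (hW : IsProperVote r n (P i + P l - V) ∨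
      (IsImproperVote r n (P i + P l - V) ∧ ∃ a c, (P i + P l - V) a c = -1 ∧ V a c = 1))
    (hgain : concurrences r n (P i) T < concurrences r n V T) :
    HasImprovingSwaps 1 P i T := by
  set D₁ := swapVotes P i l V
  have hD₁i : D₁ i = V := swapVotes_apply_left hil
  have hD₁l : D₁ l = P i + P l - V := swapVotes_apply_right
  have hD₁ : IsProperDataset r n N D₁ ∨ IsImproperDataset r n N D₁ := by
    rcases hW with hW | ⟨hW, -⟩
    · exact Or.inl (isProperDataset_swapVotes hil hP hV hW)
    refine Or.inr ⟨⟨l, hD₁l ▸ hW, fun x hxl => ?_⟩, fun a k => ?_⟩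
    · rcases eq_or_ne x i with rfl | hxi
      · rwa [hD₁i]
      · rw [show D₁ x = P x from swapVotes_apply_of_ne hxi hxl]; exact hP x
    · rw [← Matrix.sum_apply, sum_swapVotes hil]
      exact sum_apply_nonneg_of_isProperDataset hP a k
  refine ⟨1, fun | 0 => P | _ + 1 => D₁, fun _ => (i, l), le_rfl, rfl, ?_, ?_, ?_, ?_,
    fun hI => ?_, ?_⟩
  · rintro (_ | _) ht
    exacts [⟨Or.inl hP, rfl⟩, ⟨hD₁, sum_swapVotes hil⟩]
  · rintro _ ht
    obtain rfl : _ = 0 := Nat.lt_one_iff.1 ht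
    exact ⟨hil, fun x hxi hxl => swapVotes_apply_of_ne hxi hxl, swapVotes_add hil⟩
  · dsimp only; rwa [hD₁i]
  · dsimp only; rwa [hD₁i]
  · dsimp only at hI ⊢
    rcases hW with hW | ⟨hW, a, c, hneg, hone⟩
    · exact absurd hI <|
        not_isImproperDataset_of_isProperDataset (isProperDataset_swapVotes hil hP hV hW)
    refine ⟨l, hil.symm, hD₁l ▸ hW, hD₁i ▸ hV, a, c, ?_, ?_⟩
    · rwa [hD₁l]
    · rwa [hD₁i]
  · rintro t ht hI -
    obtain rfl : t = 0 := by omega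
    exact absurd hI (not_isImproperDataset_of_isProperDataset hP)

lemma hasImprovingSwaps_succ (hP : IsProperDataset r n N P) {u v : Fin N} (huv : u ≠ v)
    (hiu : i ≠ u) (hiv : i ≠ v) {V : Matrix (Fin r) (Fin n) ℤ} {k : ℕ}
    (h : HasImprovingSwaps k (swapVotes P u v V) i T) :
    HasImprovingSwaps (k + 1) P i T := by
  obtain ⟨m, D, R, hm, hD0, hds, hsw, hpr, hgain, hres, hcompat⟩ := h
  have hPi : swapVotes P u v V i = P i := swapVotes_apply_of_ne hiu hiv
  refine ⟨m + 1, fun | 0 => P | t + 1 => D t, fun | 0 => (u, v) | t + 1 => R t,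
    by omega, rfl, ?_, ?_, hpr, hPi ▸ hD0 ▸ hgain, hres, ?_⟩
  · rintro (_ | t) ht
    · exact ⟨Or.inl hP, rfl⟩
    · exact ⟨(hds t (by omega)).1, (hds t (by omega)).2.trans (hD0 ▸ sum_swapVotes huv)⟩
  · rintro (_ | t) ht
    · refine ⟨huv, fun x hxu hxv => ?_, ?_⟩
      · simp only [hD0]; exact swapVotes_apply_of_ne hxu hxv
      · simp only [hD0]; exact swapVotes_add huv
    · exact hsw t (by omega)
  · rintro (_ | t) ht hI hI'
    · exact absurd hI (not_isImproperDataset_of_isProperDataset hP)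
    · exact hcompat t (by omega) hI hI'

end HasImprovingSwaps

variable {P : Fin N → Matrix (Fin r) (Fin n) ℤ} {i l : Fin N} {σ g τ : Fin r → Fin n}

lemma hasImprovingSwaps_of_mem_range (hP : IsProperDataset r n N P) (hσ : Injective σ)
    (hg : Injective g) (hτ : Injective τ) (hPi : P i = voteMatrix σ) (hPl : P l = voteMatrix g)
    {j j₂ : Fin r} (hj : σ j ≠ τ j) (hj₂ : σ j₂ = τ j) (hgj : g j = τ j) :
    HasImprovingSwaps 1 P i (voteMatrix τ) := by
  have hj₂j : j₂ ≠ j := by rintro rfl; exact hj hj₂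
  have hil : i ≠ l := by
    rintro rfl
    exact hj (voteMatrix_injective (hPi.symm.trans hPl) ▸ hgj)
  set h := σ ∘ Equiv.swap j j₂
  have hh : Injective h := hσ.comp (Equiv.injective _)
  refine hasImprovingSwaps_one hP hil (isProperVote_voteMatrix hh) ?_ ?_
  · rw [hPi, hPl]
    refine isProperVote_or_resolvable_voteMatrix_add_sub hσ hg hh (a := j₂) (fun x hx => ?_) ?_
      (Or.inl ⟨j, by simp [h]⟩) ?_
    · rcases eq_or_ne x j with rfl | hxj
      · exact Or.inr (by simp [h, hj₂, hgj])
      · exact Or.inl (by simp [h, Equiv.swap_apply_of_ne_of_ne hxj hx])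
    · rw [hj₂, ← hgj]
      exact hg.ne hj₂j.symm
    · rintro _ ⟨⟨x, rfl⟩, -⟩
      exact ⟨Equiv.swap j j₂ x, by simp [h]⟩
  · rw [hPi]
    refine concurrences_voteMatrix_lt (j := j) hj (by simp [h, hj₂]) fun x hx => ?_
    have hxj : x ≠ j := by rintro rfl; exact hj hx
    have hxj₂ : x ≠ j₂ := by rintro rfl; exact hj₂j (hτ (hj₂.symm.trans hx)).symm
    simpa [h, Equiv.swap_apply_of_ne_of_ne hxj hxj₂] using hx

lemma hasImprovingSwaps_of_notMem_range (hP : IsProperDataset r n N P) (hσ : Injective σ)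
    (hg : Injective g) (hPi : P i = voteMatrix σ) (hPl : P l = voteMatrix g) {j : Fin r}
    (hτj : τ j ∉ range σ) (hσj : σ j ∉ range g) (hgτ : τ j ∈ range g) :
    HasImprovingSwaps 1 P i (voteMatrix τ) := by
  have hil : i ≠ l := by
    rintro rfl
    exact hσj ⟨j, by rw [voteMatrix_injective (hPi.symm.trans hPl)]⟩
  have hj : σ j ≠ τ j := fun h => hτj ⟨j, h⟩
  set h := update σ j (τ j)
  have hh : Injective h := injective_update_of_notMem_range hσ j hτj
  refine hasImprovingSwaps_one hP hil (isProperVote_voteMatrix hh) ?_ ?_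
  · rw [hPi, hPl]
    refine isProperVote_or_resolvable_voteMatrix_add_sub hσ hg hh (a := j)
      (fun x hx => Or.inl (update_of_ne hx _ _)) (fun h => hσj ⟨j, h.symm⟩)
      (Or.inr (by simpa [h] using hgτ)) ?_
    rintro _ ⟨⟨x, rfl⟩, hx⟩
    have hxj : x ≠ j := by rintro rfl; exact hσj hx
    exact ⟨x, update_of_ne hxj _ _⟩
  · rw [hPi]
    refine concurrences_voteMatrix_lt (j := j) hj (update_self _ _ _) fun x hx => ?_
    have hxj : x ≠ j := by rintro rfl; exact hj hx
    rwa [show h x = σ x from update_of_ne hxj _ _]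

lemma exists_apply_eq_of_sum_voteMatrix_eq {s s' : Fin N → Fin r → Fin n}
    (hstat : ∑ q, voteMatrix (s q) = ∑ q, voteMatrix (s' q)) (i' : Fin N) (j : Fin r) :
    ∃ l, s l j = s' i' j := by
  have hpos : 0 < (∑ q, voteMatrix (s q)) j (s' i' j) := by
    rw [hstat, Matrix.sum_apply]
    refine lt_of_lt_of_le (by simp) (single_le_sum (fun q _ => ?_) (mem_univ i'))
    simp only [voteMatrix_apply]; split_ifs <;> simp
  by_contra h
  push Not at h
  simp [Matrix.sum_apply, h] at hpos

lemma exists_notMem_range_of_sum_voteMatrix_eq {s s' : Fin N → Fin r → Fin n}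
    (hs' : ∀ q, Injective (s' q)) (hstat : ∑ q, voteMatrix (s q) = ∑ q, voteMatrix (s' q))
    {i' : Fin N} {k : Fin n} (hk : k ∉ range (s' i')) : ∃ q, k ∉ range (s q) := by
  by_contra h
  push Not at h
  have hcol : ∑ q, ∑ x, voteMatrix (s q) x k = ∑ q, ∑ x, voteMatrix (s' q) x k := by
    rw [sum_comm, sum_comm (f := fun q x => voteMatrix (s' q) x k)]
    simp only [← Matrix.sum_apply, hstat]
  have hle : ∀ q, ∑ x, voteMatrix (s' q) x k ≤ 1 ∧ 1 ≤ ∑ x, voteMatrix (s q) x k := fun q => by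
    obtain ⟨a, ha⟩ := h q
    refine ⟨by rw [sum_voteMatrix_apply_col (hs' q)]; split_ifs <;> simp, ?_⟩
    refine le_of_eq_of_le (by simp [ha]) (single_le_sum (fun x _ => ?_) (mem_univ a))
    simp only [voteMatrix_apply]; split_ifs <;> simp
  refine hcol.not_gt (sum_lt_sum (fun q _ => (hle q).1.trans (hle q).2) ⟨i', mem_univ _, ?_⟩)
  rw [sum_voteMatrix_apply_col (hs' i'), if_neg hk]
  exact zero_lt_one.trans_le (hle i').2

lemma hasImprovingSwaps_two_of_sum_eq {s s' : Fin N → Fin r → Fin n} (hs : ∀ q, Injective (s q))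
    (hs' : ∀ q, Injective (s' q)) (hstat : ∑ q, voteMatrix (s q) = ∑ q, voteMatrix (s' q))
    {i i' : Fin N} {j : Fin r} (hτj : s' i' j ∉ range (s i)) (hσj : s i j ∉ range (s' i')) :
    HasImprovingSwaps 2 (fun q => voteMatrix (s q)) i (voteMatrix (s' i')) := by
  have hP : IsProperDataset r n N fun q => voteMatrix (s q) :=
    fun q => isProperVote_voteMatrix (hs q)
  by_cases hdirect : ∃ q, s i j ∉ range (s q) ∧ s' i' j ∈ range (s q)
  · obtain ⟨q, hq, hq'⟩ := hdirect
    exact (hasImprovingSwaps_of_notMem_range hP (hs i) (hs q) rfl rfl hτj hq hq').mono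
      (by norm_num)
  push Not at hdirect
  obtain ⟨q, hq⟩ := exists_notMem_range_of_sum_voteMatrix_eq hs' hstat hσj
  obtain ⟨l, hl⟩ := exists_apply_eq_of_sum_voteMatrix_eq hstat i' j
  obtain ⟨f, g, hf, hg, hex, hσf, hfix⟩ := exists_exchange_notMem_range (hs l) (hs q) hq
  have hlq : l ≠ q := by rintro rfl; exact hdirect l hq ⟨j, hl⟩
  have hil : i ≠ l := by rintro rfl; exact hτj ⟨j, hl⟩
  have hiq : i ≠ q := by rintro rfl; exact hq ⟨j, rfl⟩
  have hfj : f j = s' i' j := by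
    refine (hfix j ?_).trans hl
    rw [hl]
    rintro (h | h)
    exacts [hτj ⟨j, h.symm⟩, hdirect q hq h]
  have hD₁ : IsProperDataset r n N (swapVotes (fun q => voteMatrix (s q)) l q (voteMatrix f)) :=
    isProperDataset_swapVotes hlq hP (isProperVote_voteMatrix hf)
      (by simpa only [voteMatrix_add_sub_of_exchange hex] using isProperVote_voteMatrix hg)
  exact hasImprovingSwaps_succ hP hlq hil hiq <| hasImprovingSwaps_of_notMem_range hD₁ (hs i) hf
    (swapVotes_apply_of_ne hil hiq) (swapVotes_apply_left hlq) hτj hσf ⟨j, hfj⟩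

end VoteSwap

open VoteSwap Set

theorem increase_concurrences_from_proper_general
    (r n N : ℕ)
    (P P' : Fin N → Matrix (Fin r) (Fin n) ℤ)
    (hP : IsProperDataset r n N P) (hP' : IsProperDataset r n N P')
    (hstat : ∑ i₀, P i₀ = ∑ i₀, P' i₀)
    (i i' : Fin N) (hne : P i ≠ P' i') :
    ∃ (m : ℕ) (D : ℕ → Fin N → Matrix (Fin r) (Fin n) ℤ) (R : ℕ → Fin N × Fin N),
      m ≤ 3 ∧ D 0 = P ∧
      (∀ t ≤ m, (IsProperDataset r n N (D t) ∨ IsImproperDataset r n N (D t)) ∧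
        ∑ i₀, D t i₀ = ∑ i₀, P i₀) ∧
      (∀ t < m, (R t).1 ≠ (R t).2 ∧
        (∀ i₀, i₀ ≠ (R t).1 → i₀ ≠ (R t).2 → D (t+1) i₀ = D t i₀) ∧
        D (t+1) (R t).1 + D (t+1) (R t).2 = D t (R t).1 + D t (R t).2) ∧
      IsProperVote r n (D m i) ∧
      concurrences r n (P i) (P' i') < concurrences r n (D m i) (P' i') ∧
      (IsImproperDataset r n N (D m) → ∃ iim, IsResolvablePair r n N (D m) iim i) ∧
      (∀ t, t + 1 ≤ m →
        IsImproperDataset r n N (D t) → IsImproperDataset r n N (D (t+1)) →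
        ∃ iim ipr, IsResolvablePair r n N (D t) iim ipr ∧
          IsResolvablePair r n N (D (t+1)) iim ipr ∧
          (iim = (R t).1 ∨ iim = (R t).2 ∨ ipr = (R t).1 ∨ ipr = (R t).2)) := by
  choose s hs hPs using fun q => exists_voteMatrix_of_isProperVote (hP q)
  choose s' hs' hP's using fun q => exists_voteMatrix_of_isProperVote (hP' q)
  obtain rfl : P = fun q => voteMatrix (s q) := funext hPs
  obtain rfl : P' = fun q => voteMatrix (s' q) := funext hP's
  suffices HasImprovingSwaps 2 (fun q => voteMatrix (s q)) i (voteMatrix (s' i')) from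
    this.mono (by norm_num)
  obtain ⟨j, hj⟩ : ∃ j, s i j ≠ s' i' j := Function.ne_iff.1 fun h => hne (by simp only [h])
  by_cases hcollide : ∃ j, s i j ≠ s' i' j ∧ s' i' j ∈ range (s i)
  · obtain ⟨j, hj, j₂, hj₂⟩ := hcollide
    obtain ⟨l, hl⟩ := exists_apply_eq_of_sum_voteMatrix_eq hstat i' j
    exact (hasImprovingSwaps_of_mem_range hP (hs i) (hs l) (hs' i') rfl rfl hj hj₂ hl).mono
      (by norm_num)
  push Not at hcollide
  refine hasImprovingSwaps_two_of_sum_eq hs hs' hstat (hcollide j hj) fun ⟨y, hy⟩ => ?_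
  have hyj : y ≠ j := by rintro rfl; exact hj hy.symm
  exact hcollide y (fun h => hyj (hs i (h.trans hy))) ⟨j, hy.symm⟩

/-- Given two proper datasets `P, P'` of `N` votes with the same
sufficient statistic and indices `i, i'` with `P i ≠ P' i'`, there is a sequence
`P = D 0, D 1, …, D m` with `m ≤ 3` of proper or improper datasets with the same
sufficient statistic as `P`, each obtained from the previous by a swap operation among
the two votes recorded in `R`, such that `D m i` is a proper vote with strictly more
concurrences with `P' i'` than `P i` has; if `D m` is improper its improper vote forms
a resolvable pair with its `i`-th vote; and any swap between two consecutive improper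
datasets is compatible with them (some common resolvable pair meets the swapped votes). -/
theorem increase_concurrences_from_proper
    (r n N : ℕ) (hr : 1 ≤ r) (hrn : r ≤ n)
    (P P' : Fin N → Matrix (Fin r) (Fin n) ℤ)
    (hP : IsProperDataset r n N P) (hP' : IsProperDataset r n N P')
    (hstat : ∑ i₀, P i₀ = ∑ i₀, P' i₀)
    (i i' : Fin N) (hne : P i ≠ P' i') :
    ∃ (m : ℕ) (D : ℕ → Fin N → Matrix (Fin r) (Fin n) ℤ) (R : ℕ → Fin N × Fin N),
      m ≤ 3 ∧ D 0 = P ∧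
      (∀ t ≤ m, (IsProperDataset r n N (D t) ∨ IsImproperDataset r n N (D t)) ∧
        ∑ i₀, D t i₀ = ∑ i₀, P i₀) ∧
      (∀ t < m, (R t).1 ≠ (R t).2 ∧
        (∀ i₀, i₀ ≠ (R t).1 → i₀ ≠ (R t).2 → D (t+1) i₀ = D t i₀) ∧
        D (t+1) (R t).1 + D (t+1) (R t).2 = D t (R t).1 + D t (R t).2) ∧
      IsProperVote r n (D m i) ∧
      concurrences r n (P i) (P' i') < concurrences r n (D m i) (P' i') ∧
      (IsImproperDataset r n N (D m) → ∃ iim, IsResolvablePair r n N (D m) iim i) ∧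
      (∀ t, t + 1 ≤ m →
        IsImproperDataset r n N (D t) → IsImproperDataset r n N (D (t+1)) →
        ∃ iim ipr, IsResolvablePair r n N (D t) iim ipr ∧
          IsResolvablePair r n N (D (t+1)) iim ipr ∧
          (iim = (R t).1 ∨ iim = (R t).2 ∨ ipr = (R t).1 ∨ ipr = (R t).2)) :=
  increase_concurrences_from_proper_general r n N P P' hP hP' hstat i i' hne
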